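/- Fix i ∈ {1,2,3} and let Q be the restriction to the de Sitter quadric dS = {y ∈ ℝ⁵ : η₄₁(y,y) = 1} of the constant 2-form α(Y,Z) = YⁱZ⁴ − Y⁴Zⁱ (i.e. Q = dyⁱ ∧ dy⁴ on dS). Then Q is a conformal Killing–Yano 2-form on dS with associated 1-form ξ_y(Z) = −(yⁱZ⁴ − y⁴Zⁱ) (i.e. ξ = −(yⁱdy⁴ − y⁴dyⁱ), so that div Q = −3(yⁱdy⁴ − y⁴dyⁱ)): for all smooth vector fields X, Y, Z on ℝ⁵ that are tangent to dS along dS, at every point y ∈ dS one has (∇_X Q)(Y,Z) + (∇_Y Q)(X,Z) = 2η₄₁(X,Y)ξ_y(Z) − η₄₁(X,Z)ξ_y(Y) − η₄₁(Y,Z)ξ_y(X). -/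

import Mathlib

noncomputable section

/-- The bilinear form η₄₁ of signature (4,1) on ℝ⁵. -/
def eta41 (X Y : Fin 5 → ℝ) : ℝ :=
  X 0 * Y 0 + X 1 * Y 1 + X 2 * Y 2 + X 3 * Y 3 - X 4 * Y 4

/-- Tangential projection onto the tangent space of the de Sitter quadric
dS = {y : η₄₁(y,y) = 1}: P_y(v) = v − η₄₁(y,v)y. -/
def proj (y v : Fin 5 → ℝ) : Fin 5 → ℝ := v - eta41 y v • y

/-- Induced Levi-Civita covariant derivative ∇_X Y = P_y(D_X Y) on dS. -/
def covD (X Y : (Fin 5 → ℝ) → Fin 5 → ℝ) (y : Fin 5 → ℝ) : Fin 5 → ℝ :=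
  proj y (fderiv ℝ Y y (X y))

/-- The constant 2-form α(Y,Z) = YⁱZ⁴ − Y⁴Zⁱ, i.e. dyⁱ ∧ dy⁴. -/
def qf (i : Fin 5) (a b : Fin 5 → ℝ) : ℝ := a i * b 4 - a 4 * b i

/-- (∇_X Q)(Y,Z) = D_X(Q(Y,Z)) − Q(∇_X Y, Z) − Q(Y, ∇_X Z) for Q = dyⁱ∧dy⁴. -/
def covQ (i : Fin 5) (X Y Z : (Fin 5 → ℝ) → Fin 5 → ℝ) (y : Fin 5 → ℝ) : ℝ :=
  fderiv ℝ (fun p => qf i (Y p) (Z p)) y (X y)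
    - qf i (covD X Y y) (Z y) - qf i (Y y) (covD X Z y)

/-- The 1-form ξ_y(Z) = −(yⁱZ⁴ − y⁴Zⁱ). -/
def xiForm (i : Fin 5) (y Z : Fin 5 → ℝ) : ℝ := -(y i * Z 4 - y 4 * Z i)

lemma tangent_deriv (B : (Fin 5 → ℝ) → Fin 5 → ℝ) (hB : ContDiff ℝ (⊤ : ℕ∞) B)
    (hBt : ∀ y, eta41 y y = 1 → eta41 y (B y) = 0)
    (y : Fin 5 → ℝ) (hy : eta41 y y = 1) (v : Fin 5 → ℝ) (hv : eta41 y v = 0) :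
    eta41 y (fderiv ℝ B y v) = - eta41 v (B y) := by
  set q : ℝ := eta41 v v with hq
  set c : ℝ → Fin 5 → ℝ := fun t => (Real.sqrt (1 + t ^ 2 * q))⁻¹ • (y + t • v) with hcdef
  have hc0 : c 0 = y := by simp [hcdef]
  have hu : HasDerivAt (fun t : ℝ => 1 + t ^ 2 * q) 0 0 := by
    simpa using ((hasDerivAt_pow 2 (0 : ℝ)).mul_const q).const_add 1
  have hs : HasDerivAt (fun t : ℝ => (Real.sqrt (1 + t ^ 2 * q))⁻¹) 0 0 := by
    have h1 : (1 : ℝ) + 0 ^ 2 * q ≠ 0 := by norm_num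
    have hsq := hu.sqrt h1
    have h2 : Real.sqrt (1 + (0:ℝ) ^ 2 * q) ≠ 0 := by norm_num
    have h3 := hsq.inv h2
    simp at h3
    exact h3
  have hyc : HasDerivAt (fun t : ℝ => y + t • v) v 0 := by
    simpa using ((hasDerivAt_id (0 : ℝ)).smul_const v).const_add y
  have hc : HasDerivAt c v 0 := by
    have := hs.smul hyc
    simp at this
    exact this
  have hBd : HasFDerivAt B (fderiv ℝ B y) y := (hB.differentiable (by simp) y).hasFDerivAt
  have hck : ∀ k : Fin 5, HasDerivAt (fun t => c t k) (v k) 0 := by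
    intro k
    have := (ContinuousLinearMap.proj (R := ℝ) (φ := fun _ : Fin 5 => ℝ) k).hasFDerivAt.comp_hasDerivAt 0 hc
    exact this
  have hBk : ∀ k : Fin 5, HasDerivAt (fun t => B (c t) k) (fderiv ℝ B y v k) 0 := by
    intro k
    have h1 : HasFDerivAt (fun p => B p k)
        ((ContinuousLinearMap.proj (R := ℝ) (φ := fun _ : Fin 5 => ℝ) k).comp (fderiv ℝ B y)) y :=
      (ContinuousLinearMap.proj (R := ℝ) (φ := fun _ : Fin 5 => ℝ) k).hasFDerivAt.comp y hBd
    rw [← hc0] at h1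
    have h2 := h1.comp_hasDerivAt 0 hc
    simp only [hc0] at h2
    exact h2
  have hh : HasDerivAt (fun t => eta41 (c t) (B (c t)))
      ((v 0 * B y 0 + y 0 * fderiv ℝ B y v 0) + (v 1 * B y 1 + y 1 * fderiv ℝ B y v 1)
        + (v 2 * B y 2 + y 2 * fderiv ℝ B y v 2) + (v 3 * B y 3 + y 3 * fderiv ℝ B y v 3)
        - (v 4 * B y 4 + y 4 * fderiv ℝ B y v 4)) 0 := by
    have := ((((((hck 0).mul (hBk 0)).add ((hck 1).mul (hBk 1))).add
        ((hck 2).mul (hBk 2))).add ((hck 3).mul (hBk 3))).sub ((hck 4).mul (hBk 4)))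
    simp only [hc0] at this
    exact this
  have hev : (fun t => eta41 (c t) (B (c t))) =ᶠ[nhds (0 : ℝ)] fun _ => 0 := by
    have hcont : Continuous fun t : ℝ => 1 + t ^ 2 * q := by continuity
    have hopen : IsOpen {t : ℝ | 0 < 1 + t ^ 2 * q} := isOpen_lt continuous_const hcont
    have hpos : ∀ᶠ t in nhds (0 : ℝ), 0 < 1 + t ^ 2 * q :=
      Filter.eventually_of_mem (hopen.mem_nhds (by norm_num)) fun t ht => ht
    filter_upwards [hpos] with t ht
    have hs2 : (Real.sqrt (1 + t ^ 2 * q))⁻¹ * (Real.sqrt (1 + t ^ 2 * q))⁻¹ * (1 + t ^ 2 * q) = 1 := by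
      set s := Real.sqrt (1 + t ^ 2 * q) with hsdef
      have hsp : s ≠ 0 := ne_of_gt (Real.sqrt_pos.mpr ht)
      have h3 : s * s = 1 + t ^ 2 * q := Real.mul_self_sqrt ht.le
      rw [← h3]
      field_simp
    have hnorm : eta41 (c t) (c t) = 1 := by
      have hexp : eta41 (c t) (c t)
          = ((Real.sqrt (1 + t ^ 2 * q))⁻¹ * (Real.sqrt (1 + t ^ 2 * q))⁻¹)
            * (eta41 y y + 2 * t * eta41 y v + t ^ 2 * eta41 v v) := by
        simp only [hcdef, eta41, Pi.smul_apply, Pi.add_apply, smul_eq_mul]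
        ring
      rw [hexp, hy, hv, ← hq]
      calc ((Real.sqrt (1 + t ^ 2 * q))⁻¹ * (Real.sqrt (1 + t ^ 2 * q))⁻¹)
            * (1 + 2 * t * 0 + t ^ 2 * q)
          = (Real.sqrt (1 + t ^ 2 * q))⁻¹ * (Real.sqrt (1 + t ^ 2 * q))⁻¹ * (1 + t ^ 2 * q) := by ring
        _ = 1 := hs2
    exact hBt (c t) hnorm
  have hzero : HasDerivAt (fun t => eta41 (c t) (B (c t))) 0 0 :=
    (hasDerivAt_const (0 : ℝ) (0 : ℝ)).congr_of_eventuallyEq hev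
  have hu2 := hh.unique hzero
  simp only [eta41]
  linarith [hu2]

lemma qf_fderiv (i : Fin 5) (Y Z : (Fin 5 → ℝ) → Fin 5 → ℝ)
    (hY : ContDiff ℝ (⊤ : ℕ∞) Y) (hZ : ContDiff ℝ (⊤ : ℕ∞) Z) (y v : Fin 5 → ℝ) :
    fderiv ℝ (fun p => qf i (Y p) (Z p)) y v
      = qf i (fderiv ℝ Y y v) (Z y) + qf i (Y y) (fderiv ℝ Z y v) := by
  have hYd : HasFDerivAt Y (fderiv ℝ Y y) y := (hY.differentiable (by simp) y).hasFDerivAt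
  have hZd : HasFDerivAt Z (fderiv ℝ Z y) y := (hZ.differentiable (by simp) y).hasFDerivAt
  have hYk : ∀ k : Fin 5, HasFDerivAt (fun p => Y p k)
      ((ContinuousLinearMap.proj (R := ℝ) (φ := fun _ : Fin 5 => ℝ) k).comp (fderiv ℝ Y y)) y :=
    fun k => (ContinuousLinearMap.proj (R := ℝ) (φ := fun _ : Fin 5 => ℝ) k).hasFDerivAt.comp y hYd
  have hZk : ∀ k : Fin 5, HasFDerivAt (fun p => Z p k)
      ((ContinuousLinearMap.proj (R := ℝ) (φ := fun _ : Fin 5 => ℝ) k).comp (fderiv ℝ Z y)) y :=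
    fun k => (ContinuousLinearMap.proj (R := ℝ) (φ := fun _ : Fin 5 => ℝ) k).hasFDerivAt.comp y hZd
  have h := ((hYk i).mul (hZk 4)).sub ((hYk 4).mul (hZk i))
  simp only [qf]
  rw [HasFDerivAt.fderiv (f := fun p => Y p i * Z p 4 - Y p 4 * Z p i) h]
  simp only [ContinuousLinearMap.coe_sub', Pi.sub_apply, ContinuousLinearMap.add_apply,
    ContinuousLinearMap.coe_smul', Pi.smul_apply, ContinuousLinearMap.coe_comp', Function.comp_apply,
    ContinuousLinearMap.proj_apply, smul_eq_mul]
  ring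

/-- Q = dyⁱ ∧ dy⁴ is a conformal Killing–Yano 2-form on the de Sitter
quadric dS = {y : η₄₁(y,y) = 1} with associated 1-form
ξ = −(yⁱdy⁴ − y⁴dyⁱ). -/
theorem cky_dS (i : Fin 5) (hi : i = 1 ∨ i = 2 ∨ i = 3)
    (X Y Z : (Fin 5 → ℝ) → Fin 5 → ℝ)
    (hX : ContDiff ℝ (⊤ : ℕ∞) X) (hY : ContDiff ℝ (⊤ : ℕ∞) Y) (hZ : ContDiff ℝ (⊤ : ℕ∞) Z)
    (hXt : ∀ y, eta41 y y = 1 → eta41 y (X y) = 0)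
    (hYt : ∀ y, eta41 y y = 1 → eta41 y (Y y) = 0)
    (hZt : ∀ y, eta41 y y = 1 → eta41 y (Z y) = 0)
    (y : Fin 5 → ℝ) (hy : eta41 y y = 1) :
    covQ i X Y Z y + covQ i Y X Z y
      = 2 * eta41 (X y) (Y y) * xiForm i y (Z y)
        - eta41 (X y) (Z y) * xiForm i y (Y y)
        - eta41 (Y y) (Z y) * xiForm i y (X y) := by
  have hXY := tangent_deriv Y hY hYt y hy (X y) (hXt y hy)
  have hXZ := tangent_deriv Z hZ hZt y hy (X y) (hXt y hy)
  have hYX := tangent_deriv X hX hXt y hy (Y y) (hYt y hy)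
  have hYZ := tangent_deriv Z hZ hZt y hy (Y y) (hYt y hy)
  unfold covQ covD proj xiForm
  rw [qf_fderiv i Y Z hY hZ y (X y), qf_fderiv i X Z hX hZ y (Y y)]
  simp only [qf, Pi.sub_apply, Pi.smul_apply, smul_eq_mul]
  rw [hXY, hXZ, hYX, hYZ]
  simp only [eta41]
  ring
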